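/- For phylogenetic trees T₁, T₂ with n leaves labeled 1,…,n, if π(T₁) = π(T₂) as permutations of {1,…,2n−2}, then T₁ = T₂ (up to label-preserving isomorphism). -/

import Mathlib

open Equiv Finset
open scoped Classical

/-- A phylogenetic tree with `n` leaves labeled `1,…,n`: a rooted tree (every node is
reached from the root by iterating the parent map) with no outdegree-1 nodes, whose
leaves are injectively labeled by `1,…,n`. -/
structure PhyloTree (n : ℕ) where
  /-- number of nodes -/
  numNodes : ℕ
  numNodes_pos : 0 < numNodes
  /-- the parent map (the root is its own parent); the arcs of the tree are
  (parent v, v) for v ≠ root -/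
  parent : Fin numNodes → Fin numNodes
  root : Fin numNodes
  parent_root : parent root = root
  /-- every node is reachable from the root: iterating `parent` reaches the root -/
  reach_root : ∀ v, ∃ k, parent^[k] v = root
  /-- no node has outdegree 1 -/
  no_outdegree_one : ∀ v,
    (Finset.univ.filter fun w => parent w = v ∧ w ≠ root).card ≠ 1
  /-- the labeling of the nodes; only its values on leaves matter -/
  labelOf : Fin numNodes → ℕ
  /-- the leaves (nodes without children) are labeled bijectively by `1,…,n` -/
  label_bij : Set.BijOn labelOf
    {v | (Finset.univ.filter fun w => parent w = v ∧ w ≠ root) = ∅} (Set.Icc 1 n)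

namespace PhyloTree

variable {n : ℕ} (T : PhyloTree n)

/-- The children of a node. -/
def children (v : Fin T.numNodes) : Finset (Fin T.numNodes) :=
  Finset.univ.filter fun w => T.parent w = v ∧ w ≠ T.root

/-- A leaf is a node without children. -/
def IsLeaf (v : Fin T.numNodes) : Prop := T.children v = ∅

/-- The internal nodes of `T`. -/
noncomputable def internals : Finset (Fin T.numNodes) :=
  Finset.univ.filter fun v => ¬ T.IsLeaf v

/-- The height of a node: the length of a longest directed path from it to a leaf. -/
noncomputable def height (v : Fin T.numNodes) : ℕ :=
  sSup {k | ∃ f : Fin (k + 1) → Fin T.numNodes, f 0 = v ∧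
    (∀ i : Fin k, f i.succ ∈ T.children (f i.castSucc)) ∧ T.IsLeaf (f (Fin.last k))}

/-- The smallest `ℓ`-label of a child of `v`. -/
noncomputable def minChildLabel (ℓ : Fin T.numNodes → ℕ) (v : Fin T.numNodes) : ℕ :=
  sInf (ℓ '' (T.children v : Set (Fin T.numNodes)))

/-- `ℓ` is the bottom-up ordering of `T`: an injective map `V → {1,…,|V|}` that
(a) extends the leaf labels, (b) is increasing with height, and (c) for internal nodes
of equal height, is increasing with the minimum label of their children. -/
noncomputable def IsBUO (ℓ : Fin T.numNodes → ℕ) : Prop :=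
  Function.Injective ℓ ∧ (∀ v, ℓ v ∈ Set.Icc 1 T.numNodes) ∧
  (∀ v, T.IsLeaf v → ℓ v = T.labelOf v) ∧
  (∀ u v, T.height u < T.height v → ℓ u < ℓ v) ∧
  (∀ u v, 0 < T.height u → T.height u = T.height v →
    T.minChildLabel ℓ u < T.minChildLabel ℓ v → ℓ u < ℓ v)

/-- The matching representation of `T` (relative to its bottom-up ordering `ℓ`):
the family of the sets `ℓ(children(u))` over the internal nodes `u`. -/
noncomputable def matchRep (ℓ : Fin T.numNodes → ℕ) : Finset (Finset ℕ) :=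
  T.internals.image fun u => (T.children u).image ℓ

/-- The cycle `κ(S) = (i₁, i₂, …, i_k)` associated to a set `S = {i₁ < ⋯ < i_k}`
(the identity if `S` is a singleton or empty). -/
def kappa (S : Finset ℕ) : Equiv.Perm ℕ := (S.sort (· ≤ ·)).formPerm

/-- The matching permutation of `T` (relative to its bottom-up ordering `ℓ`): the
product of the cycles associated to the members of the matching representation; it
fixes every number not in `{1,…,|V|−1}` (in particular it lies in `S_{2n−2}`). -/
noncomputable def matchPerm (ℓ : Fin T.numNodes → ℕ) : Equiv.Perm ℕ :=
  ((T.internals.sort (· ≤ ·)).map fun u => kappa ((T.children u).image ℓ)).prod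

end PhyloTree

/-- A label-preserving isomorphism of phylogenetic trees: a bijection of the nodes
preserving the root, the arcs, and the leaf labels. -/
def PhyloIso {n : ℕ} (T₁ T₂ : PhyloTree n) : Prop :=
  ∃ e : Fin T₁.numNodes ≃ Fin T₂.numNodes,
    e T₁.root = T₂.root ∧
    (∀ v, e (T₁.parent v) = T₂.parent (e v)) ∧
    (∀ v, T₁.IsLeaf v → T₂.labelOf (e v) = T₁.labelOf v)

/-- The least number of transpositions whose product equals `σ`. -/
noncomputable def minSwaps {α : Type*} [DecidableEq α] (σ : Equiv.Perm α) : ℕ :=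
  sInf {k | ∃ l : List (Equiv.Perm α), (∀ τ ∈ l, τ.IsSwap) ∧ l.prod = σ ∧ l.length = k}

/-- `dTrans π₁ π₂` is the least number of transpositions needed to express `π₂⁻¹ * π₁`. -/
noncomputable def dTrans {α : Type*} [DecidableEq α] (π₁ π₂ : Equiv.Perm α) : ℕ :=
  minSwaps (π₂⁻¹ * π₁)

namespace PhyloTree

variable {n : ℕ} {T : PhyloTree n}

lemma mem_children {w v : Fin T.numNodes} :
    w ∈ T.children v ↔ T.parent w = v ∧ w ≠ T.root := by
  simp [children]

lemma children_disjoint {u v : Fin T.numNodes} (h : u ≠ v) :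
    Disjoint (T.children u) (T.children v) := by
  rw [Finset.disjoint_left]
  intro w hu hv
  rw [mem_children] at hu hv
  exact h (hu.1 ▸ hv.1)

lemma mem_children_parent {v : Fin T.numNodes} (h : v ≠ T.root) :
    v ∈ T.children (T.parent v) := mem_children.2 ⟨rfl, h⟩

lemma not_isLeaf_parent {v : Fin T.numNodes} (h : v ≠ T.root) :
    ¬ T.IsLeaf (T.parent v) := by
  intro hl
  have := mem_children_parent h
  rw [IsLeaf] at hl
  rw [hl] at this
  exact absurd this (Finset.notMem_empty v)

/-- depth of a node: number of parent-steps to the root -/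
noncomputable def depth (T : PhyloTree n) (v : Fin T.numNodes) : ℕ :=
  Nat.find (T.reach_root v)

lemma parent_iterate_depth (v : Fin T.numNodes) :
    T.parent^[T.depth v] v = T.root := Nat.find_spec (T.reach_root v)

lemma depth_min {v : Fin T.numNodes} {k : ℕ} (h : k < T.depth v) :
    T.parent^[k] v ≠ T.root := Nat.find_min (T.reach_root v) h

lemma depth_root : T.depth T.root = 0 := by
  have : T.parent^[0] T.root = T.root := rfl
  exact Nat.eq_zero_of_le_zero (Nat.find_le this)

lemma depth_child {w v : Fin T.numNodes} (h : w ∈ T.children v) :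
    T.depth w = T.depth v + 1 := by
  obtain ⟨hp, hr⟩ := mem_children.1 h
  have h1 : T.depth w ≤ T.depth v + 1 := by
    apply Nat.find_le
    rw [Function.iterate_succ_apply, hp]
    exact parent_iterate_depth v
  have h2 : T.depth v + 1 ≤ T.depth w := by
    have hd : 0 < T.depth w := by
      rcases Nat.eq_zero_or_pos (T.depth w) with h0 | h0
      · exact absurd (by simpa [h0] using parent_iterate_depth (T := T) w) hr
      · exact h0
    have : T.parent^[T.depth w - 1] v = T.root := by
      have := parent_iterate_depth (T := T) w
      rw [← Nat.succ_pred_eq_of_pos hd, Function.iterate_succ_apply, hp] at this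
      exact this
    have h3 : T.depth v ≤ T.depth w - 1 := Nat.find_le this
    omega
  omega

lemma depth_lt (v : Fin T.numNodes) : T.depth v < T.numNodes := by
  by_contra hlt
  push_neg at hlt
  -- the iterates parent^[i] v for i ≤ depth v are pairwise distinct
  have key : ∀ a b : ℕ, a < b → b ≤ T.depth v → T.parent^[a] v = T.parent^[b] v → False := by
    intro a b hab hb hij
    have h1 : T.parent^[T.depth v - (b - a)] v = T.root := by
      have h2 : T.parent^[T.depth v - b] (T.parent^[b] v) = T.root := by
        rw [← Function.iterate_add_apply, Nat.sub_add_cancel hb]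
        exact parent_iterate_depth v
      rw [← hij, ← Function.iterate_add_apply] at h2
      have heq : T.depth v - b + a = T.depth v - (b - a) := by omega
      rwa [heq] at h2
    exact depth_min (by omega) h1
  have hinj : Function.Injective (fun i : Fin (T.depth v + 1) => T.parent^[i.val] v) := by
    intro i j hij
    simp only at hij
    by_contra hne
    rcases lt_trichotomy i.val j.val with h | h | h
    · exact key i.val j.val h (by omega) hij
    · exact hne (Fin.ext h)
    · exact key j.val i.val h (by omega) hij.symm
  have := Fintype.card_le_of_injective _ hinj
  simp [Fintype.card_fin] at this
  omega

/-- the set in the definition of height -/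
def heightSet (T : PhyloTree n) (v : Fin T.numNodes) : Set ℕ :=
  {k | ∃ f : Fin (k + 1) → Fin T.numNodes, f 0 = v ∧
    (∀ i : Fin k, f i.succ ∈ T.children (f i.castSucc)) ∧ T.IsLeaf (f (Fin.last k))}

lemma height_def (v : Fin T.numNodes) : T.height v = sSup (T.heightSet v) := rfl

/-- characterization of the height set via ℕ-indexed paths -/
lemma mem_heightSet_iff {v : Fin T.numNodes} {k : ℕ} :
    k ∈ T.heightSet v ↔ ∃ F : ℕ → Fin T.numNodes, F 0 = v ∧
      (∀ i < k, F (i + 1) ∈ T.children (F i)) ∧ T.IsLeaf (F k) := by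
  constructor
  · rintro ⟨f, h0, hstep, hleaf⟩
    refine ⟨fun i => f ⟨min i k, by omega⟩, by simpa using h0, ?_, ?_⟩
    · intro i hi
      have h1 : min (i + 1) k = i + 1 := by omega
      have h2 : min i k = i := by omega
      have := hstep ⟨i, hi⟩
      simp only [Fin.succ, Fin.castSucc, Fin.castAdd, Fin.castLE] at this
      convert this using 2 <;> simp [h1, h2, Fin.ext_iff]
    · have : min k k = k := by omega
      simpa [this, Fin.last] using hleaf
  · rintro ⟨F, h0, hstep, hleaf⟩
    refine ⟨fun j => F j.val, h0, ?_, ?_⟩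
    · intro i
      simpa using hstep i.val i.isLt
    · simpa [Fin.last] using hleaf

lemma heightSet_bddAbove (v : Fin T.numNodes) : BddAbove (T.heightSet v) := by
  refine ⟨T.numNodes, fun k hk => ?_⟩
  rw [mem_heightSet_iff] at hk
  obtain ⟨F, h0, hstep, hleaf⟩ := hk
  have hdepth : ∀ i ≤ k, T.depth (F i) = T.depth v + i := by
    intro i hi
    induction i with
    | zero => simp [h0]
    | succ m ih =>
      have h1 := depth_child (hstep m (by omega))
      have h2 := ih (by omega)
      omega
  have := hdepth k le_rfl
  have := depth_lt (T := T) (F k)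
  omega

lemma zero_mem_heightSet {v : Fin T.numNodes} (h : T.IsLeaf v) : 0 ∈ T.heightSet v := by
  rw [mem_heightSet_iff]
  exact ⟨fun _ => v, rfl, fun i hi => absurd hi (by omega), h⟩

lemma heightSet_nonempty (v : Fin T.numNodes) : (T.heightSet v).Nonempty := by
  -- strong induction on numNodes - depth v
  have H : ∀ m : ℕ, ∀ v : Fin T.numNodes, T.numNodes - T.depth v ≤ m →
      (T.heightSet v).Nonempty := by
    intro m
    induction m with
    | zero => intro v hv; have := depth_lt (T := T) v; omega
    | succ m ih =>
      intro v hv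
      by_cases hl : T.IsLeaf v
      · exact ⟨0, zero_mem_heightSet hl⟩
      · have : (T.children v).Nonempty := Finset.nonempty_iff_ne_empty.2 hl
        obtain ⟨w, hw⟩ := this
        have hdw := depth_child hw
        have hwlt := depth_lt (T := T) w
        obtain ⟨k, hk⟩ := ih w (by omega)
        rw [mem_heightSet_iff] at hk
        obtain ⟨F, h0, hstep, hleaf⟩ := hk
        refine ⟨k + 1, mem_heightSet_iff.2
          ⟨fun i => if i = 0 then v else F (i - 1), by simp, ?_, ?_⟩⟩
        · intro i hi
          cases i with
          | zero => simpa [h0] using hw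
          | succ j =>
            simp only [Nat.succ_ne_zero, if_false, Nat.add_sub_cancel]
            have hj : j < k := by omega
            have := hstep j hj
            simpa using this
        · simpa using hleaf
  exact H T.numNodes v (by omega)

lemma height_mem (v : Fin T.numNodes) : T.height v ∈ T.heightSet v :=
  Nat.sSup_mem (heightSet_nonempty v) (heightSet_bddAbove v)

lemma le_height {v : Fin T.numNodes} {k : ℕ} (h : k ∈ T.heightSet v) : k ≤ T.height v :=
  le_csSup (heightSet_bddAbove v) h

lemma height_succ_mem {w v : Fin T.numNodes} (hw : w ∈ T.children v) {k : ℕ}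
    (hk : k ∈ T.heightSet w) : k + 1 ∈ T.heightSet v := by
  rw [mem_heightSet_iff] at hk ⊢
  obtain ⟨F, h0, hstep, hleaf⟩ := hk
  refine ⟨fun i => if i = 0 then v else F (i - 1), by simp, ?_, ?_⟩
  · intro i hi
    cases i with
    | zero => simpa [h0] using hw
    | succ j =>
      simp only [Nat.succ_ne_zero, if_false, Nat.add_sub_cancel]
      exact hstep j (by omega)
  · simpa using hleaf

lemma height_child_lt {w v : Fin T.numNodes} (hw : w ∈ T.children v) :
    T.height w < T.height v :=
  lt_of_lt_of_le (Nat.lt_succ_self _) (le_height (height_succ_mem hw (height_mem w)))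

lemma height_leaf {v : Fin T.numNodes} (h : T.IsLeaf v) : T.height v = 0 := by
  have hm := height_mem (T := T) v
  rw [mem_heightSet_iff] at hm
  obtain ⟨F, h0, hstep, _⟩ := hm
  by_contra hne
  have : F 1 ∈ T.children (F 0) := hstep 0 (by omega)
  rw [h0] at this
  rw [IsLeaf] at h
  rw [h] at this
  exact absurd this (Finset.notMem_empty _)

lemma isLeaf_of_height_zero {v : Fin T.numNodes} (h : T.height v = 0) : T.IsLeaf v := by
  by_contra hl
  obtain ⟨w, hw⟩ := Finset.nonempty_iff_ne_empty.2 hl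
  have := height_child_lt hw
  omega

lemma height_internal {v : Fin T.numNodes} (h : ¬ T.IsLeaf v) :
    ∃ w ∈ T.children v, T.height v = T.height w + 1 := by
  have hm := height_mem (T := T) v
  rw [mem_heightSet_iff] at hm
  obtain ⟨F, h0, hstep, hleaf⟩ := hm
  set k := T.height v with hk
  have hk0 : k ≠ 0 := by
    intro h0'
    exact h (isLeaf_of_height_zero (show T.height v = 0 by omega))
  have hw : F 1 ∈ T.children v := by
    have := hstep 0 (by omega)
    rwa [h0] at this
  refine ⟨F 1, hw, ?_⟩
  have hle : T.height v ≤ T.height (F 1) + 1 := by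
    -- tail path: k - 1 ∈ heightSet (F 1)
    have : k - 1 ∈ T.heightSet (F 1) := by
      rw [mem_heightSet_iff]
      refine ⟨fun i => F (i + 1), rfl, ?_, ?_⟩
      · intro i hi
        exact hstep (i + 1) (by omega)
      · have hkk : k - 1 + 1 = k := by omega
        show T.IsLeaf (F (k - 1 + 1))
        rw [hkk]; exact hleaf
    have := le_height this
    omega
  have := height_child_lt hw
  omega

lemma root_height_max {v : Fin T.numNodes} (h : v ≠ T.root) :
    T.height v < T.height T.root := by
  -- strong induction on depth v
  have H : ∀ m : ℕ, ∀ v : Fin T.numNodes, T.depth v ≤ m → v ≠ T.root →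
      T.height v < T.height T.root := by
    intro m
    induction m with
    | zero =>
      intro v hv hne
      exfalso
      have : T.parent^[0] v = T.root := by
        have := parent_iterate_depth (T := T) v
        rwa [Nat.le_zero.1 hv] at this
      exact hne this
    | succ m ih =>
      intro v hv hne
      by_cases hp : T.parent v = T.root
      · have : v ∈ T.children T.root := by rw [← hp]; exact mem_children_parent hne
        exact height_child_lt this
      · have hc : v ∈ T.children (T.parent v) := mem_children_parent hne
        have hd := depth_child hc
        have := ih (T.parent v) (by omega) hp
        exact lt_trans (height_child_lt hc) this
  exact H (T.depth v) v le_rfl h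
end PhyloTree
namespace PhyloTree

variable {n : ℕ} {T : PhyloTree n} {ℓ : Fin T.numNodes → ℕ}

lemma isLeaf_iff_filter (v : Fin T.numNodes) :
    (Finset.univ.filter fun w => T.parent w = v ∧ w ≠ T.root) = T.children v := rfl

lemma label_surj (hB : T.IsBUO ℓ) {j : ℕ} (hj1 : 1 ≤ j) (hj2 : j ≤ T.numNodes) :
    ∃ v, ℓ v = j := by
  have himg : Finset.univ.image ℓ = Finset.Icc 1 T.numNodes := by
    apply Finset.eq_of_subset_of_card_le
    · intro x hx
      rw [Finset.mem_image] at hx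
      obtain ⟨v, _, rfl⟩ := hx
      have := hB.2.1 v
      rw [Set.mem_Icc] at this
      rw [Finset.mem_Icc]
      exact this
    · rw [Finset.card_image_of_injective _ hB.1, Finset.card_univ, Fintype.card_fin,
        Nat.card_Icc]
      omega
  have : j ∈ Finset.univ.image ℓ := by rw [himg, Finset.mem_Icc]; exact ⟨hj1, hj2⟩
  rw [Finset.mem_image] at this
  obtain ⟨v, _, hv⟩ := this
  exact ⟨v, hv⟩

lemma label_le (hB : T.IsBUO ℓ) (v : Fin T.numNodes) : ℓ v ≤ T.numNodes :=
  (Set.mem_Icc.1 (hB.2.1 v)).2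

lemma one_le_label (hB : T.IsBUO ℓ) (v : Fin T.numNodes) : 1 ≤ ℓ v :=
  (Set.mem_Icc.1 (hB.2.1 v)).1

lemma label_root (hB : T.IsBUO ℓ) : ℓ T.root = T.numNodes := by
  obtain ⟨v, hv⟩ := label_surj hB T.numNodes_pos le_rfl
  by_cases h : v = T.root
  · rw [← h, hv]
  · have h1 : ℓ v < ℓ T.root := hB.2.2.2.1 _ _ (root_height_max h)
    have := label_le hB T.root
    omega

lemma label_child_lt (hB : T.IsBUO ℓ) {w v : Fin T.numNodes} (hw : w ∈ T.children v) :
    ℓ w < ℓ v := hB.2.2.2.1 _ _ (height_child_lt hw)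

lemma label_leaf_le (hB : T.IsBUO ℓ) {v : Fin T.numNodes} (hv : T.IsLeaf v) :
    1 ≤ ℓ v ∧ ℓ v ≤ n := by
  have h1 : ℓ v = T.labelOf v := hB.2.2.1 v hv
  have h2 : T.labelOf v ∈ Set.Icc 1 n := by
    apply T.label_bij.mapsTo
    show (Finset.univ.filter fun w => T.parent w = v ∧ w ≠ T.root) = ∅
    rw [isLeaf_iff_filter]
    exact hv
  rw [Set.mem_Icc] at h2
  omega

/-- there is at least one leaf -/
lemma exists_leaf (T : PhyloTree n) : ∃ v : Fin T.numNodes, T.IsLeaf v := by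
  have hm := height_mem (T := T) T.root
  rw [mem_heightSet_iff] at hm
  obtain ⟨F, _, _, hleaf⟩ := hm
  exact ⟨_, hleaf⟩

lemma one_le_n (T : PhyloTree n) : 1 ≤ n := by
  obtain ⟨v, hv⟩ := exists_leaf T
  have h2 : T.labelOf v ∈ Set.Icc 1 n := by
    apply T.label_bij.mapsTo
    show (Finset.univ.filter fun w => T.parent w = v ∧ w ≠ T.root) = ∅
    rw [isLeaf_iff_filter]; exact hv
  rw [Set.mem_Icc] at h2
  omega

lemma lt_label_internal (hB : T.IsBUO ℓ) {v : Fin T.numNodes} (hv : ¬ T.IsLeaf v) :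
    n < ℓ v := by
  obtain ⟨u, hu, hlab⟩ : ∃ u, T.IsLeaf u ∧ T.labelOf u = n := by
    have hn : (n : ℕ) ∈ Set.Icc 1 n := Set.mem_Icc.2 ⟨one_le_n T, le_rfl⟩
    obtain ⟨u, hu, hlab⟩ := T.label_bij.surjOn hn
    refine ⟨u, ?_, hlab⟩
    show T.children u = ∅
    rw [← isLeaf_iff_filter]
    exact hu
  have h1 : ℓ u = n := by rw [hB.2.2.1 u hu, hlab]
  have h2 : T.height u < T.height v := by
    rw [height_leaf hu]
    rcases Nat.eq_zero_or_pos (T.height v) with h | h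
    · exact absurd (isLeaf_of_height_zero h) hv
    · exact h
  have := hB.2.2.2.1 _ _ h2
  omega

lemma two_le_card_children {v : Fin T.numNodes} (hv : ¬ T.IsLeaf v) :
    2 ≤ (T.children v).card := by
  have h1 : (T.children v).card ≠ 1 := by
    have := T.no_outdegree_one v
    rwa [isLeaf_iff_filter] at this
  have h2 : (T.children v).Nonempty := Finset.nonempty_iff_ne_empty.2 hv
  have := Finset.card_pos.2 h2
  omega

lemma minChildLabel_eq_min' (hB : T.IsBUO ℓ) {v : Fin T.numNodes} (hv : ¬ T.IsLeaf v) :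
    T.minChildLabel ℓ v = ((T.children v).image ℓ).min'
      (by
        apply Finset.Nonempty.image
        exact Finset.nonempty_iff_ne_empty.2 hv) := by
  rw [minChildLabel]
  have hset : (ℓ '' ((T.children v) : Set (Fin T.numNodes))) =
      (((T.children v).image ℓ : Finset ℕ) : Set ℕ) := by
    rw [Finset.coe_image]
  rw [hset]
  apply le_antisymm
  · apply Nat.sInf_le
    exact Finset.min'_mem _ _
  · have hne0 : ((T.children v).image ℓ).Nonempty :=
      Finset.Nonempty.image (Finset.nonempty_iff_ne_empty.2 hv) ℓ
    have hne : ((((T.children v).image ℓ) : Finset ℕ) : Set ℕ).Nonempty := by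
      obtain ⟨x, hx⟩ := hne0
      exact ⟨x, by exact_mod_cast hx⟩
    have hmem := Nat.sInf_mem hne
    exact Finset.min'_le _ _ (by exact_mod_cast hmem)

end PhyloTree
namespace PhyloTree
section Kappa

lemma kappa_apply_of_not_mem {S : Finset ℕ} {j : ℕ} (h : j ∉ S) : kappa S j = j :=
  List.formPerm_apply_of_notMem (by rwa [Finset.mem_sort])

lemma kappa_apply_mem {S : Finset ℕ} {j : ℕ} (h : j ∈ S) : kappa S j ∈ S := by
  have := List.formPerm_apply_mem_of_mem (l := S.sort (· ≤ ·)) (x := j)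
    (by rwa [Finset.mem_sort])
  rwa [Finset.mem_sort] at this

lemma kappa_pow_mem {S : Finset ℕ} {j : ℕ} (h : j ∈ S) (k : ℕ) : (kappa S ^ k) j ∈ S := by
  induction k with
  | zero => simpa using h
  | succ m ih => rw [pow_succ', Equiv.Perm.mul_apply]; exact kappa_apply_mem ih

lemma kappa_apply_ne {S : Finset ℕ} {j : ℕ} (h : j ∈ S) (h2 : 2 ≤ S.card) :
    kappa S j ≠ j := by
  apply (List.formPerm_apply_mem_ne_self_iff (S.sort (· ≤ ·)) (Finset.sort_nodup _ _) j
    (by rwa [Finset.mem_sort])).2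
  rwa [Finset.length_sort]

lemma prod_kappa_apply_of_not_mem {L : List (Finset ℕ)} {j : ℕ}
    (h : ∀ S ∈ L, j ∉ S) : (L.map kappa).prod j = j := by
  induction L with
  | nil => rfl
  | cons S L ih =>
    rw [List.map_cons, List.prod_cons, Equiv.Perm.mul_apply,
      ih (fun S' hS' => h S' (List.mem_cons_of_mem _ hS')),
      kappa_apply_of_not_mem (h S List.mem_cons_self)]

lemma prod_kappa_apply_mem {L : List (Finset ℕ)} (hL : L.Pairwise Disjoint)
    {S : Finset ℕ} (hS : S ∈ L) {j : ℕ} (hj : j ∈ S) :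
    (L.map kappa).prod j = kappa S j := by
  induction L with
  | nil => simp at hS
  | cons T L ih =>
    rw [List.map_cons, List.prod_cons, Equiv.Perm.mul_apply]
    rcases List.mem_cons.1 hS with rfl | hS'
    · have hfix : ∀ S' ∈ L, j ∉ S' := by
        intro S' hS' hjS'
        have hd : Disjoint S S' := (List.pairwise_cons.1 hL).1 S' hS'
        exact (Finset.disjoint_left.1 hd hj) hjS'
      rw [prod_kappa_apply_of_not_mem hfix]
    · have hd : Disjoint T S := (List.pairwise_cons.1 hL).1 S hS'
      rw [ih (List.pairwise_cons.1 hL).2 hS']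
      have : kappa S j ∈ S := kappa_apply_mem hj
      exact kappa_apply_of_not_mem (Finset.disjoint_right.1 hd this)

lemma prod_kappa_pow_apply_mem {L : List (Finset ℕ)} (hL : L.Pairwise Disjoint)
    {S : Finset ℕ} (hS : S ∈ L) {j : ℕ} (hj : j ∈ S) (k : ℕ) :
    ((L.map kappa).prod ^ k) j = (kappa S ^ k) j := by
  induction k with
  | zero => rfl
  | succ m ih =>
    rw [pow_succ', pow_succ', Equiv.Perm.mul_apply, Equiv.Perm.mul_apply, ih]
    rw [prod_kappa_apply_mem hL hS (kappa_pow_mem hj m)]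

/-- the σ-orbit of an element of a member `S` is exactly `S` -/
lemma orbit_eq {L : List (Finset ℕ)} (hL : L.Pairwise Disjoint)
    {S : Finset ℕ} (hS : S ∈ L) {j : ℕ} (hj : j ∈ S) {x : ℕ} :
    (∃ k : ℕ, ((L.map kappa).prod ^ k) j = x) ↔ x ∈ S := by
  constructor
  · rintro ⟨k, rfl⟩
    rw [prod_kappa_pow_apply_mem hL hS hj]
    exact kappa_pow_mem hj k
  · intro hx
    set l := S.sort (· ≤ ·) with hl
    have hjl : j ∈ l := by rwa [hl, Finset.mem_sort]
    have hxl : x ∈ l := by rwa [hl, Finset.mem_sort]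
    obtain ⟨i, hi, hji⟩ := List.getElem_of_mem hjl
    obtain ⟨m, hm, hxm⟩ := List.getElem_of_mem hxl
    have heq : (i + (l.length - i + m)) % l.length = m := by
      have h1 : i + (l.length - i + m) = l.length + m := by omega
      rw [h1, Nat.add_mod_left, Nat.mod_eq_of_lt hm]
    refine ⟨l.length - i + m, ?_⟩
    rw [prod_kappa_pow_apply_mem hL hS hj]
    have h2 := List.formPerm_pow_apply_getElem l (Finset.sort_nodup _ _) (l.length - i + m) i hi
    rw [hji] at h2
    show (l.formPerm ^ (l.length - i + m)) j = x
    rw [h2]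
    simp only [heq]
    exact hxm

lemma rep_subset {L L' : List (Finset ℕ)} (hL : L.Pairwise Disjoint)
    (hL' : L'.Pairwise Disjoint) (h2 : ∀ S ∈ L, 2 ≤ S.card)
    (hprod : (L.map kappa).prod = (L'.map kappa).prod) :
    ∀ S ∈ L, S ∈ L' := by
  intro S hS
  have hSne : S.Nonempty := Finset.card_pos.1 (by have := h2 S hS; omega)
  obtain ⟨j, hj⟩ := hSne
  have hmove : (L.map kappa).prod j ≠ j := by
    rw [prod_kappa_apply_mem hL hS hj]
    exact kappa_apply_ne hj (h2 S hS)
  have hj' : ∃ S' ∈ L', j ∈ S' := by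
    by_contra hcon
    push_neg at hcon
    rw [hprod, prod_kappa_apply_of_not_mem hcon] at hmove
    exact hmove rfl
  obtain ⟨S', hS', hjS'⟩ := hj'
  have hSS' : S = S' := by
    ext x
    rw [← orbit_eq hL hS hj (x := x), hprod, orbit_eq hL' hS' hjS']
  rwa [hSS']

end Kappa
end PhyloTree
namespace PhyloTree

variable {n : ℕ} {T : PhyloTree n} {ℓ : Fin T.numNodes → ℕ}

lemma mem_internals {u : Fin T.numNodes} : u ∈ T.internals ↔ ¬ T.IsLeaf u := by
  simp [internals]

/-- the list of children label sets, in the order used by `matchPerm` -/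
noncomputable def repList (T : PhyloTree n) (ℓ : Fin T.numNodes → ℕ) : List (Finset ℕ) :=
  (T.internals.sort (· ≤ ·)).map fun u => (T.children u).image ℓ

lemma matchPerm_eq (T : PhyloTree n) (ℓ : Fin T.numNodes → ℕ) :
    T.matchPerm ℓ = ((repList T ℓ).map kappa).prod := by
  simp only [matchPerm, repList, List.map_map]
  rfl

lemma mem_repList_iff {S : Finset ℕ} : S ∈ repList T ℓ ↔ S ∈ T.matchRep ℓ := by
  simp only [repList, matchRep, List.mem_map, Finset.mem_image, Finset.mem_sort]

lemma repList_pairwise (hB : T.IsBUO ℓ) : (repList T ℓ).Pairwise Disjoint := by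
  rw [repList, List.pairwise_map]
  have hnd : (T.internals.sort (· ≤ ·)).Nodup := Finset.sort_nodup _ _
  apply List.Pairwise.imp _ hnd
  intro u v huv
  exact (Finset.disjoint_image hB.1).2 (children_disjoint huv)

lemma repList_card (hB : T.IsBUO ℓ) : ∀ S ∈ repList T ℓ, 2 ≤ S.card := by
  intro S hS
  rw [repList, List.mem_map] at hS
  obtain ⟨u, hu, rfl⟩ := hS
  rw [Finset.mem_sort, mem_internals] at hu
  rw [Finset.card_image_of_injective _ hB.1]
  exact two_le_card_children hu

lemma matchRep_eq_of_matchPerm_eq {n : ℕ} {T₁ T₂ : PhyloTree n}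
    {ℓ₁ : Fin T₁.numNodes → ℕ} {ℓ₂ : Fin T₂.numNodes → ℕ}
    (h₁ : T₁.IsBUO ℓ₁) (h₂ : T₂.IsBUO ℓ₂)
    (hπ : T₁.matchPerm ℓ₁ = T₂.matchPerm ℓ₂) :
    T₁.matchRep ℓ₁ = T₂.matchRep ℓ₂ := by
  rw [matchPerm_eq, matchPerm_eq] at hπ
  ext S
  constructor
  · intro hS
    rw [← mem_repList_iff] at hS ⊢
    exact rep_subset (repList_pairwise h₁) (repList_pairwise h₂) (repList_card h₁) hπ S hS
  · intro hS
    rw [← mem_repList_iff] at hS ⊢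
    exact rep_subset (repList_pairwise h₂) (repList_pairwise h₁) (repList_card h₂) hπ.symm S hS

lemma mem_matchRep (hu : ¬ T.IsLeaf u) : (T.children u).image ℓ ∈ T.matchRep ℓ := by
  rw [matchRep, Finset.mem_image]
  exact ⟨u, mem_internals.2 hu, rfl⟩

end PhyloTree
namespace PhyloTree

lemma height_transfer {n : ℕ} {T₁ T₂ : PhyloTree n}
    {ℓ₁ : Fin T₁.numNodes → ℕ} {ℓ₂ : Fin T₂.numNodes → ℕ}
    {g₁ : ℕ → Fin T₁.numNodes} {g₂ : ℕ → Fin T₂.numNodes}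
    (hg₁inv : ∀ w, g₁ (ℓ₁ w) = w) (hg₂inv : ∀ w, g₂ (ℓ₂ w) = w)
    {u : Fin T₁.numNodes} {v : Fin T₂.numNodes}
    (hu : ¬ T₁.IsLeaf u) (hv : ¬ T₂.IsLeaf v)
    (hS : (T₁.children u).image ℓ₁ = (T₂.children v).image ℓ₂)
    (hIH : ∀ i ∈ (T₁.children u).image ℓ₁, T₁.height (g₁ i) = T₂.height (g₂ i)) :
    T₁.height u = T₂.height v := by
  apply le_antisymm
  · obtain ⟨w, hw, hhw⟩ := height_internal hu
    have hiS : ℓ₁ w ∈ (T₁.children u).image ℓ₁ := Finset.mem_image_of_mem _ hw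
    have hi2 : ℓ₁ w ∈ (T₂.children v).image ℓ₂ := hS ▸ hiS
    obtain ⟨x, hx, hxi⟩ := Finset.mem_image.1 hi2
    have h1 : T₂.height x = T₁.height w := by
      have := hIH _ hiS
      rw [hg₁inv] at this
      rw [← hxi, hg₂inv] at this
      exact this.symm
    have h2 := height_child_lt hx
    omega
  · obtain ⟨x, hx, hhx⟩ := height_internal hv
    have hiS : ℓ₂ x ∈ (T₂.children v).image ℓ₂ := Finset.mem_image_of_mem _ hx
    have hi1 : ℓ₂ x ∈ (T₁.children u).image ℓ₁ := hS ▸ hiS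
    obtain ⟨w, hw, hwi⟩ := Finset.mem_image.1 hi1
    have h1 : T₁.height w = T₂.height x := by
      have := hIH _ hi1
      rw [← hwi, hg₁inv] at this
      rw [hwi, hg₂inv] at this
      exact this
    have h2 := height_child_lt hw
    omega

lemma key_induction {n : ℕ} {T₁ T₂ : PhyloTree n}
    {ℓ₁ : Fin T₁.numNodes → ℕ} {ℓ₂ : Fin T₂.numNodes → ℕ}
    (h₁ : T₁.IsBUO ℓ₁) (h₂ : T₂.IsBUO ℓ₂)
    (hrep : T₁.matchRep ℓ₁ = T₂.matchRep ℓ₂)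
    (hN : T₁.numNodes = T₂.numNodes)
    {g₁ : ℕ → Fin T₁.numNodes} {g₂ : ℕ → Fin T₂.numNodes}
    (hg₁ : ∀ j, 1 ≤ j → j ≤ T₁.numNodes → ℓ₁ (g₁ j) = j)
    (hg₂ : ∀ j, 1 ≤ j → j ≤ T₂.numNodes → ℓ₂ (g₂ j) = j)
    (hg₁inv : ∀ w, g₁ (ℓ₁ w) = w) (hg₂inv : ∀ w, g₂ (ℓ₂ w) = w) :
    ∀ j, 1 ≤ j → j ≤ T₁.numNodes →
      T₁.height (g₁ j) = T₂.height (g₂ j) ∧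
      (n < j → (T₁.children (g₁ j)).image ℓ₁ = (T₂.children (g₂ j)).image ℓ₂) := by
  intro j
  induction j using Nat.strong_induction_on with
  | _ j IH =>
  intro hj1 hjN
  by_cases hjn : j ≤ n
  · -- leaf case
    have hl₁ : T₁.IsLeaf (g₁ j) := by
      by_contra hc
      have := lt_label_internal h₁ hc
      rw [hg₁ j hj1 hjN] at this
      omega
    have hl₂ : T₂.IsLeaf (g₂ j) := by
      by_contra hc
      have := lt_label_internal h₂ hc
      rw [hg₂ j hj1 (hN ▸ hjN)] at this
      omega
    refine ⟨?_, fun h => absurd h (by omega)⟩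
    rw [height_leaf hl₁, height_leaf hl₂]
  · push_neg at hjn
    set u₁ := g₁ j with hu₁def
    set u₂ := g₂ j with hu₂def
    have hlu₁ : ℓ₁ u₁ = j := hg₁ j hj1 hjN
    have hlu₂ : ℓ₂ u₂ = j := hg₂ j hj1 (hN ▸ hjN)
    have hu₁ : ¬ T₁.IsLeaf u₁ := by
      intro hc
      have := (label_leaf_le h₁ hc).2
      omega
    have hu₂ : ¬ T₂.IsLeaf u₂ := by
      intro hc
      have := (label_leaf_le h₂ hc).2
      omega
    set S₁ := (T₁.children u₁).image ℓ₁ with hS₁def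
    set S₂ := (T₂.children u₂).image ℓ₂ with hS₂def
    have hS₁lt : ∀ i ∈ S₁, 1 ≤ i ∧ i < j := by
      intro i hi
      obtain ⟨w, hw, rfl⟩ := Finset.mem_image.1 hi
      have := label_child_lt h₁ hw
      have := one_le_label h₁ w
      omega
    have hS₂lt : ∀ i ∈ S₂, 1 ≤ i ∧ i < j := by
      intro i hi
      obtain ⟨x, hx, rfl⟩ := Finset.mem_image.1 hi
      have := label_child_lt h₂ hx
      have := one_le_label h₂ x
      omega
    have hIH₁ : ∀ i ∈ S₁, T₁.height (g₁ i) = T₂.height (g₂ i) := by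
      intro i hi
      obtain ⟨hi1, hi2⟩ := hS₁lt i hi
      exact (IH i hi2 hi1 (by omega)).1
    have hIH₂ : ∀ i ∈ S₂, T₁.height (g₁ i) = T₂.height (g₂ i) := by
      intro i hi
      obtain ⟨hi1, hi2⟩ := hS₂lt i hi
      exact (IH i hi2 hi1 (by omega)).1
    -- main claim: S₁ = S₂
    have hSS : S₁ = S₂ := by
      by_contra hne
      -- S₁ appears in T₂, S₂ appears in T₁
      have hS₁mem : S₁ ∈ T₂.matchRep ℓ₂ := hrep ▸ mem_matchRep hu₁
      have hS₂mem : S₂ ∈ T₁.matchRep ℓ₁ := hrep ▸ mem_matchRep hu₂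
      obtain ⟨w₂, hw₂int, hw₂S⟩ := Finset.mem_image.1 hS₁mem
      obtain ⟨w₁, hw₁int, hw₁S⟩ := Finset.mem_image.1 hS₂mem
      rw [mem_internals] at hw₂int hw₁int
      set k₁ := ℓ₁ w₁ with hk₁def
      set k₂ := ℓ₂ w₂ with hk₂def
      have hk₁n : n < k₁ := lt_label_internal h₁ hw₁int
      have hk₂n : n < k₂ := lt_label_internal h₂ hw₂int
      have hS₂ne : S₂.Nonempty :=
        Finset.Nonempty.image (Finset.nonempty_iff_ne_empty.2 hu₂) _
      have hS₁ne : S₁.Nonempty :=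
        Finset.Nonempty.image (Finset.nonempty_iff_ne_empty.2 hu₁) _
      -- k₁ > j
      have hk₁j : j < k₁ := by
        rcases lt_trichotomy k₁ j with h | h | h
        · exfalso
          have hIHk := (IH k₁ h (by omega) (by have := label_le h₁ w₁; omega)).2 hk₁n
          rw [hg₁inv w₁] at hIHk
          -- hIHk : (children₁ w₁).image ℓ₁ = (children₂ (g₂ k₁)).image ℓ₂
          rw [hw₁S] at hIHk
          -- S₂ is the child set of both g₂ k₁ and u₂ in T₂
          have hne2 : g₂ k₁ ≠ u₂ := by
            intro hc
            rw [hc] at hIHk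
            have := hg₂ k₁ (by omega) (by have := label_le h₁ w₁; omega)
            rw [hc, hlu₂] at this
            omega
          have hdisj : Disjoint ((T₂.children (g₂ k₁)).image ℓ₂) S₂ := by
            rw [hS₂def]
            exact (Finset.disjoint_image h₂.1).2 (children_disjoint hne2)
          rw [← hIHk] at hdisj
          exact hS₂ne.ne_empty ((Finset.disjoint_self_iff_empty _).1 hdisj)
        · exfalso
          -- k₁ = j means w₁ = u₁, so S₂ = S₁
          have : w₁ = u₁ := by
            apply h₁.1
            rw [hlu₁, ← hk₁def, h]
          rw [this] at hw₁S
          exact hne (by rw [hS₁def]; exact hw₁S)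
        · exact h
      have hk₂j : j < k₂ := by
        rcases lt_trichotomy k₂ j with h | h | h
        · exfalso
          have hIHk := (IH k₂ h (by omega) (by have := label_le h₂ w₂; have := hN; omega)).2 hk₂n
          rw [hg₂inv w₂] at hIHk
          rw [hw₂S] at hIHk
          have hne2 : g₁ k₂ ≠ u₁ := by
            intro hc
            rw [hc] at hIHk
            have := hg₁ k₂ (by omega) (by have := label_le h₂ w₂; have := hN; omega)
            rw [hc, hlu₁] at this
            omega
          have hdisj : Disjoint ((T₁.children (g₁ k₂)).image ℓ₁) S₁ := by
            rw [hS₁def]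
            exact (Finset.disjoint_image h₁.1).2 (children_disjoint hne2)
          rw [hIHk] at hdisj
          exact hS₁ne.ne_empty ((Finset.disjoint_self_iff_empty _).1 hdisj)
        · exfalso
          have : w₂ = u₂ := by
            apply h₂.1
            rw [hlu₂, ← hk₂def, h]
          rw [this] at hw₂S
          exact hne (by rw [hS₂def]; exact hw₂S.symm)
        · exact h
      -- heights: height₁ u₁ ≤ height₁ w₁ = height₂ u₂ ≤ height₂ w₂ = height₁ u₁
      have hle₁ : T₁.height u₁ ≤ T₁.height w₁ := by
        by_contra hc
        push_neg at hc
        have := h₁.2.2.2.1 _ _ hc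
        omega
      have hle₂ : T₂.height u₂ ≤ T₂.height w₂ := by
        by_contra hc
        push_neg at hc
        have := h₂.2.2.2.1 _ _ hc
        omega
      have heq₁ : T₁.height w₁ = T₂.height u₂ :=
        height_transfer hg₁inv hg₂inv hw₁int hu₂ (by rw [hw₁S]) (by rw [hw₁S]; exact hIH₂)
      have heq₂ : T₁.height u₁ = T₂.height w₂ :=
        height_transfer hg₁inv hg₂inv hu₁ hw₂int hw₂S.symm hIH₁
      -- all four heights are equal
      have hall₁ : T₁.height u₁ = T₁.height w₁ := by omega
      have hall₂ : T₂.height u₂ = T₂.height w₂ := by omega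
      -- height positive
      have hpos₁ : 0 < T₁.height u₁ := by
        rcases Nat.eq_zero_or_pos (T₁.height u₁) with h | h
        · exact absurd (isLeaf_of_height_zero h) hu₁
        · exact h
      have hpos₂ : 0 < T₂.height u₂ := by
        rcases Nat.eq_zero_or_pos (T₂.height u₂) with h | h
        · exact absurd (isLeaf_of_height_zero h) hu₂
        · exact h
      -- compare minimum child labels
      have hmin₁ : T₁.minChildLabel ℓ₁ u₁ ≤ T₁.minChildLabel ℓ₁ w₁ := by
        by_contra hc
        push_neg at hc
        have := h₁.2.2.2.2 w₁ u₁ (by omega) (by omega) hc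
        omega
      have hmin₂ : T₂.minChildLabel ℓ₂ u₂ ≤ T₂.minChildLabel ℓ₂ w₂ := by
        by_contra hc
        push_neg at hc
        have := h₂.2.2.2.2 w₂ u₂ (by omega) (by omega) hc
        omega
      -- translate to min' of S₁, S₂
      have hm₁u : T₁.minChildLabel ℓ₁ u₁ = S₁.min' hS₁ne := by
        rw [minChildLabel_eq_min' h₁ hu₁]
      have hm₁w : T₁.minChildLabel ℓ₁ w₁ = S₂.min' hS₂ne := by
        rw [minChildLabel_eq_min' h₁ hw₁int]
        congr 1
      have hm₂u : T₂.minChildLabel ℓ₂ u₂ = S₂.min' hS₂ne := by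
        rw [minChildLabel_eq_min' h₂ hu₂]
      have hm₂w : T₂.minChildLabel ℓ₂ w₂ = S₁.min' hS₁ne := by
        rw [minChildLabel_eq_min' h₂ hw₂int]
        congr 1
      have hminSeq : S₁.min' hS₁ne = S₂.min' hS₂ne := by
        rw [hm₁u, hm₁w] at hmin₁
        rw [hm₂u, hm₂w] at hmin₂
        omega
      -- but S₁ and S₂ are disjoint (children of distinct nodes of T₁)
      have hneu : u₁ ≠ w₁ := by
        intro hc
        rw [hc] at hlu₁
        omega
      have hdisj : Disjoint S₁ S₂ := by
        rw [hS₁def, ← hw₁S]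
        exact (Finset.disjoint_image h₁.1).2 (children_disjoint hneu)
      have h1 := S₁.min'_mem hS₁ne
      have h2 := S₂.min'_mem hS₂ne
      rw [hminSeq] at h1
      exact (Finset.disjoint_right.1 hdisj h2) h1
    refine ⟨?_, fun _ => hSS⟩
    exact height_transfer hg₁inv hg₂inv hu₁ hu₂ hSS hIH₁

end PhyloTree
namespace PhyloTree

variable {n : ℕ} {T : PhyloTree n} {ℓ : Fin T.numNodes → ℕ}

lemma matchRep_bound (hB : T.IsBUO ℓ) :
    ∀ S ∈ T.matchRep ℓ, ∀ i ∈ S, i ≤ T.numNodes - 1 := by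
  intro S hS i hi
  rw [matchRep, Finset.mem_image] at hS
  obtain ⟨u, _, rfl⟩ := hS
  rw [Finset.mem_image] at hi
  obtain ⟨w, hw, rfl⟩ := hi
  have hwr : w ≠ T.root := (mem_children.1 hw).2
  have h1 : ℓ w ≠ T.numNodes := by
    intro hc
    exact hwr (hB.1 (by rw [hc, label_root hB]))
  have h2 := label_le hB w
  omega

lemma matchRep_top (hB : T.IsBUO ℓ) (h2 : 2 ≤ T.numNodes) :
    ∃ S ∈ T.matchRep ℓ, T.numNodes - 1 ∈ S := by
  obtain ⟨v, hv⟩ := label_surj hB (j := T.numNodes - 1) (by omega) (by omega)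
  have hvr : v ≠ T.root := by
    intro hc
    rw [hc, label_root hB] at hv
    omega
  refine ⟨(T.children (T.parent v)).image ℓ, mem_matchRep (not_isLeaf_parent hvr), ?_⟩
  rw [Finset.mem_image]
  exact ⟨v, mem_children_parent hvr, hv⟩

lemma matchRep_empty_iff (hB : T.IsBUO ℓ) :
    T.matchRep ℓ = ∅ ↔ T.numNodes = 1 := by
  constructor
  · intro h
    by_contra hc
    have h2 : 2 ≤ T.numNodes := by have := T.numNodes_pos; omega
    obtain ⟨S, hS, _⟩ := matchRep_top hB h2
    rw [h] at hS
    exact absurd hS (Finset.notMem_empty _)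
  · intro h
    rw [matchRep, Finset.image_eq_empty]
    rw [Finset.eq_empty_iff_forall_notMem]
    intro u hu
    rw [mem_internals] at hu
    apply hu
    show T.children u = ∅
    rw [Finset.eq_empty_iff_forall_notMem]
    intro w hw
    have h1 : w = T.root := by
      have : Subsingleton (Fin T.numNodes) := by rw [h]; infer_instance
      exact Subsingleton.elim _ _
    exact (mem_children.1 hw).2 h1

lemma numNodes_eq_of_matchRep_eq {n : ℕ} {T₁ T₂ : PhyloTree n}
    {ℓ₁ : Fin T₁.numNodes → ℕ} {ℓ₂ : Fin T₂.numNodes → ℕ}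
    (h₁ : T₁.IsBUO ℓ₁) (h₂ : T₂.IsBUO ℓ₂)
    (hrep : T₁.matchRep ℓ₁ = T₂.matchRep ℓ₂) : T₁.numNodes = T₂.numNodes := by
  have hp₁ := T₁.numNodes_pos
  have hp₂ := T₂.numNodes_pos
  by_cases hc₁ : T₁.numNodes = 1
  · have : T₁.matchRep ℓ₁ = ∅ := (matchRep_empty_iff h₁).2 hc₁
    rw [hrep] at this
    rw [hc₁, (matchRep_empty_iff h₂).1 this]
  · by_cases hc₂ : T₂.numNodes = 1
    · have : T₂.matchRep ℓ₂ = ∅ := (matchRep_empty_iff h₂).2 hc₂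
      rw [← hrep] at this
      rw [hc₂, (matchRep_empty_iff h₁).1 this]
    · obtain ⟨S₁, hS₁, hm₁⟩ := matchRep_top h₁ (by omega)
      obtain ⟨S₂, hS₂, hm₂⟩ := matchRep_top h₂ (by omega)
      have hb₁ := matchRep_bound h₂ S₁ (hrep ▸ hS₁) _ hm₁
      have hb₂ := matchRep_bound h₁ S₂ (hrep ▸ hS₂) _ hm₂
      omega

end PhyloTree
/-- If two phylogenetic trees with n leaves labeled 1,…,n have the same matching
permutation, then they are equal up to label-preserving isomorphism. -/
theorem matchPerm_inj {n : ℕ} (T₁ T₂ : PhyloTree n)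
    (ℓ₁ : Fin T₁.numNodes → ℕ) (ℓ₂ : Fin T₂.numNodes → ℕ)
    (h₁ : T₁.IsBUO ℓ₁) (h₂ : T₂.IsBUO ℓ₂)
    (hπ : T₁.matchPerm ℓ₁ = T₂.matchPerm ℓ₂) : PhyloIso T₁ T₂ := by
  open PhyloTree in
  -- from equal permutations to equal matching representations
  have hrep : T₁.matchRep ℓ₁ = T₂.matchRep ℓ₂ :=
    PhyloTree.matchRep_eq_of_matchPerm_eq h₁ h₂ hπ
  have hN : T₁.numNodes = T₂.numNodes :=
    PhyloTree.numNodes_eq_of_matchRep_eq h₁ h₂ hrep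
  haveI : Nonempty (Fin T₁.numNodes) := ⟨T₁.root⟩
  haveI : Nonempty (Fin T₂.numNodes) := ⟨T₂.root⟩
  set g₁ : ℕ → Fin T₁.numNodes := Function.invFun ℓ₁ with hg₁def
  set g₂ : ℕ → Fin T₂.numNodes := Function.invFun ℓ₂ with hg₂def
  have hg₁inv : ∀ w, g₁ (ℓ₁ w) = w := fun w => Function.leftInverse_invFun h₁.1 w
  have hg₂inv : ∀ w, g₂ (ℓ₂ w) = w := fun w => Function.leftInverse_invFun h₂.1 w
  have hg₁ : ∀ j, 1 ≤ j → j ≤ T₁.numNodes → ℓ₁ (g₁ j) = j := by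
    intro j hj1 hj2
    exact Function.invFun_eq (PhyloTree.label_surj h₁ hj1 hj2)
  have hg₂ : ∀ j, 1 ≤ j → j ≤ T₂.numNodes → ℓ₂ (g₂ j) = j := by
    intro j hj1 hj2
    exact Function.invFun_eq (PhyloTree.label_surj h₂ hj1 hj2)
  have hkey := PhyloTree.key_induction h₁ h₂ hrep hN hg₁ hg₂ hg₁inv hg₂inv
  -- the label-compatibility of the candidate isomorphism
  have hcomp : ∀ v, ℓ₂ (g₂ (ℓ₁ v)) = ℓ₁ v := by
    intro v
    exact hg₂ _ (PhyloTree.one_le_label h₁ v) (hN ▸ PhyloTree.label_le h₁ v)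
  have hcomp' : ∀ v, ℓ₁ (g₁ (ℓ₂ v)) = ℓ₂ v := by
    intro v
    exact hg₁ _ (PhyloTree.one_le_label h₂ v) (hN ▸ PhyloTree.label_le h₂ v)
  -- leaves are preserved
  have hleaf : ∀ v, T₁.IsLeaf v → T₂.IsLeaf (g₂ (ℓ₁ v)) := by
    intro v hv
    by_contra hc
    have hgt := PhyloTree.lt_label_internal h₂ hc
    rw [hcomp v] at hgt
    have := (PhyloTree.label_leaf_le h₁ hv).2
    omega
  -- children labels are preserved
  have hcc : ∀ v, (T₁.children v).image ℓ₁ = (T₂.children (g₂ (ℓ₁ v))).image ℓ₂ := by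
    intro v
    by_cases hv : T₁.IsLeaf v
    · rw [hv, hleaf v hv]
      simp
    · have hj := PhyloTree.lt_label_internal h₁ hv
      have := (hkey (ℓ₁ v) (PhyloTree.one_le_label h₁ v) (PhyloTree.label_le h₁ v)).2 hj
      rwa [hg₁inv v] at this
  refine ⟨⟨fun v => g₂ (ℓ₁ v), fun v => g₁ (ℓ₂ v), ?_, ?_⟩, ?_, ?_, ?_⟩
  · intro v
    simp only
    rw [hcomp v, hg₁inv v]
  · intro v
    simp only
    rw [hcomp' v, hg₂inv v]
  · show g₂ (ℓ₁ T₁.root) = T₂.root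
    apply h₂.1
    rw [hcomp, PhyloTree.label_root h₁, PhyloTree.label_root h₂, hN]
  · intro v
    show g₂ (ℓ₁ (T₁.parent v)) = T₂.parent (g₂ (ℓ₁ v))
    by_cases hvr : v = T₁.root
    · subst hvr
      rw [T₁.parent_root]
      have hroot : g₂ (ℓ₁ T₁.root) = T₂.root := by
        apply h₂.1
        rw [hcomp, PhyloTree.label_root h₁, PhyloTree.label_root h₂, hN]
      rw [hroot, T₂.parent_root]
    · have hv : v ∈ T₁.children (T₁.parent v) := PhyloTree.mem_children_parent hvr
      have h1 : ℓ₁ v ∈ (T₁.children (T₁.parent v)).image ℓ₁ :=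
        Finset.mem_image_of_mem _ hv
      rw [hcc (T₁.parent v)] at h1
      obtain ⟨x, hx, hxv⟩ := Finset.mem_image.1 h1
      have h2 : x = g₂ (ℓ₁ v) := by
        apply h₂.1
        rw [hxv, hcomp v]
      rw [h2] at hx
      exact ((PhyloTree.mem_children.1 hx).1).symm
  · intro v hv
    show T₂.labelOf (g₂ (ℓ₁ v)) = T₁.labelOf v
    have hl2 := hleaf v hv
    rw [← h₂.2.2.1 _ hl2, hcomp v, h₁.2.2.1 _ hv]
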